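/- arXiv:1809.09871 — 2 statements merged into one kernel-verified Lean document; each statement's English description precedes it below -/
import Mathlib

section
/- Let P be a polynomial in two variables with real coefficients such that for every real h > 0 the limit as x → ∞ (over real x) of P(x, hx) / x² exists and is a finite real number. Then the total degree of P is at most 2. -/
/-!
If `d = P.totalDegree > 2`, the degree-`d` homogeneous component `F` of `P` is nonzero. A nonzero
homogeneous polynomial cannot vanish on the whole ray `{(1, h) : h > 0}`, since by homogeneity it
would then vanish on the open quadrant. For `h > 0` with `F(1, h) ≠ 0`, the restriction
`x ↦ P(x, h x)` is a polynomial whose coefficient of `x ^ d` is `F(1, h)`, so `P(x, h x) / x²` is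
unbounded as `x → ∞`.
-/

open MvPolynomial

namespace MvPolynomial

variable {σ R : Type*} [CommSemiring R]

theorem eval_aeval_C_mul_X (P : MvPolynomial σ R) (v : σ → R) (x : R) :
    (aeval (fun i ↦ Polynomial.C (v i) * Polynomial.X) P).eval x = eval (fun i ↦ v i * x) P := by
  induction P using MvPolynomial.induction_on with
  | C r => simp
  | add p q hp hq => simp [hp, hq]
  | mul_X p i hp => simp [hp]

theorem aeval_C_mul_X_monomial (m : σ →₀ ℕ) (r : R) (v : σ → R) :
    aeval (fun i ↦ Polynomial.C (v i) * Polynomial.X) (monomial m r) =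
      Polynomial.C (eval v (monomial m r)) * Polynomial.X ^ m.degree := by
  simp only [aeval_monomial, eval_monomial, Finsupp.prod, mul_pow, Finset.prod_mul_distrib,
    Finset.prod_pow_eq_pow_sum, map_mul, map_prod, map_pow, Polynomial.algebraMap_eq]
  rw [mul_assoc, Finsupp.degree_apply]

theorem coeff_aeval_C_mul_X (P : MvPolynomial σ R) (v : σ → R) (n : ℕ) :
    (aeval (fun i ↦ Polynomial.C (v i) * Polynomial.X) P).coeff n =
      eval v (homogeneousComponent n P) := by
  induction P using MvPolynomial.induction_on' with
  | monomial m r =>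
    rw [aeval_C_mul_X_monomial, Polynomial.coeff_C_mul_X_pow,
      homogeneousComponent_of_mem (isHomogeneous_monomial r rfl)]
    split_ifs <;> simp_all
  | add p q hp hq => simp only [map_add, Polynomial.coeff_add, hp, hq]

theorem IsHomogeneous.eval_mul_const {F : MvPolynomial σ R} {n : ℕ} (hF : F.IsHomogeneous n)
    (v : σ → R) (c : R) : eval (fun i ↦ v i * c) F = eval v F * c ^ n := by
  have hline : MvPolynomial.aeval (fun i ↦ Polynomial.C (v i) * Polynomial.X) F =
      Polynomial.C (eval v F) * Polynomial.X ^ n := by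
    ext k
    rw [coeff_aeval_C_mul_X, homogeneousComponent_of_mem hF, Polynomial.coeff_C_mul_X_pow]
    split_ifs <;> simp
  rw [← eval_aeval_C_mul_X, hline]
  simp

theorem homogeneousComponent_totalDegree_ne_zero {P : MvPolynomial σ R} (hP : P ≠ 0) :
    homogeneousComponent P.totalDegree P ≠ 0 := by
  obtain ⟨m, hm, hmP⟩ := P.support.exists_mem_eq_sup (support_nonempty.2 hP) Finsupp.degree
  have hmd : m.degree = P.totalDegree := hmP.symm
  intro h
  have hcoeff := congr_arg (coeff m) h
  rw [coeff_homogeneousComponent, if_pos hmd, coeff_zero] at hcoeff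
  exact mem_support_iff.1 hm hcoeff

theorem exists_pos_eval_ne_zero_of_isHomogeneous {K : Type*} [Field K] [LinearOrder K]
    [IsStrictOrderedRing K] {F : MvPolynomial (Fin 2) K} {n : ℕ} (hF : F.IsHomogeneous n)
    (hF0 : F ≠ 0) : ∃ h : K, 0 < h ∧ eval ![1, h] F ≠ 0 := by
  by_contra! H
  refine hF0 (funext_set (fun _ ↦ Set.Ioi 0) (fun _ ↦ Set.Ioi_infinite 0) fun v hv ↦ ?_)
  have hv0 : 0 < v 0 := hv 0 trivial
  have hv1 : 0 < v 1 := hv 1 trivial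
  have hv_eq : v = fun i ↦ ![1, v 1 / v 0] i * v 0 := by
    ext i; fin_cases i <;> simp; field_simp
  rw [hv_eq, hF.eval_mul_const, H _ (div_pos hv1 hv0), map_zero, zero_mul]

end MvPolynomial

open Polynomial Filter Topology in
theorem Polynomial.natDegree_le_of_tendsto_eval_div_pow {𝕜 : Type*} [NormedField 𝕜]
    [LinearOrder 𝕜] [IsStrictOrderedRing 𝕜] [OrderTopology 𝕜] {p : 𝕜[X]} {n : ℕ} {L : 𝕜}
    (h : Tendsto (fun x ↦ p.eval x / x ^ n) atTop (𝓝 L)) : p.natDegree ≤ n := by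
  by_contra! hn
  have hdeg : (X ^ n : 𝕜[X]).degree < p.degree := degree_lt_degree (by rwa [natDegree_X_pow])
  refine not_tendsto_atTop_of_tendsto_nhds h.abs ?_
  simpa using abs_div_tendsto_atTop_atTop_of_degree_gt p _ hdeg (pow_ne_zero n X_ne_zero)

/-- If `P` is a real polynomial in two variables such that for every real `h > 0`
the limit of `P(x, hx) / x²` as `x → ∞` exists (as a finite real number), then
the total degree of `P` is at most `2`. -/
theorem totalDegree_le_two_of_normalized_limits (P : MvPolynomial (Fin 2) ℝ)
    (hP : ∀ h : ℝ, 0 < h → ∃ L : ℝ,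
      Filter.Tendsto (fun x : ℝ => MvPolynomial.eval ![x, h * x] P / x ^ 2)
        Filter.atTop (nhds L)) :
    P.totalDegree ≤ 2 := by
  by_contra! hd
  have hP0 : P ≠ 0 := by rintro rfl; simp at hd
  obtain ⟨h, hh, hFh⟩ := exists_pos_eval_ne_zero_of_isHomogeneous
    (homogeneousComponent_isHomogeneous P.totalDegree P)
    (homogeneousComponent_totalDegree_ne_zero hP0)
  set p := aeval (fun i ↦ Polynomial.C (![1, h] i) * Polynomial.X) P
  have hcoeff : p.coeff P.totalDegree ≠ 0 := by rwa [coeff_aeval_C_mul_X]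
  obtain ⟨L, hL⟩ := hP h hh
  have hp : p.natDegree ≤ 2 := by
    refine Polynomial.natDegree_le_of_tendsto_eval_div_pow (L := L) ?_
    convert hL using 3 with x
    rw [eval_aeval_C_mul_X]
    congr 2
    funext i
    fin_cases i <;> simp [mul_comm]
  exact hd.not_ge ((Polynomial.le_natDegree_of_ne_zero hcoeff).trans hp)
end

section
/- (Rényi characterization of the logarithm) Fix a natural number a ≥ 2. Let I : ℕ → ℝ be a function defined on positive natural numbers satisfying: additivity, I(m·n) = I(m) + I(n) for all positive m, n; monotonicity, I(m) ≤ I(m+1) for all positive m; and normalization, I(a) = 1. Then I(n) = log n / log a for every positive natural number n. -/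
/-- (Rényi characterization of the logarithm) Fix a natural number `a ≥ 2`.
If `I : ℕ → ℝ` satisfies additivity `I (m*n) = I m + I n` for positive `m, n`,
monotonicity `I m ≤ I (m+1)` for positive `m`, and normalization `I a = 1`,
then `I n = log n / log a` for every positive natural number `n`. -/
theorem renyi_log_characterization (a : ℕ) (ha : 2 ≤ a) (I : ℕ → ℝ)
    (hadd : ∀ m n : ℕ, 0 < m → 0 < n → I (m * n) = I m + I n)
    (hmono : ∀ m : ℕ, 0 < m → I m ≤ I (m + 1))
    (hnorm : I a = 1) :
    ∀ n : ℕ, 0 < n → I n = Real.log n / Real.log a := by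
  have apos : 0 < a := by omega
  have ha1 : (1:ℝ) < a := by exact_mod_cast lt_of_lt_of_le one_lt_two ha
  have hloga : 0 < Real.log a := Real.log_pos ha1
  have h1 : I 1 = 0 := by
    have := hadd 1 1 one_pos one_pos
    simp at this
    linarith
  have hpow : ∀ n : ℕ, 0 < n → ∀ k : ℕ, I (n ^ k) = k * I n := by
    intro n hn k
    induction k with
    | zero => simp [h1]
    | succ k ih =>
      rw [pow_succ, hadd _ _ (pow_pos hn k) hn, ih]
      push_cast; ring
  have hmono' : ∀ n m : ℕ, 0 < m → m ≤ n → I m ≤ I n := by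
    intro n
    induction n with
    | zero => intro m hm h; omega
    | succ n ih =>
      intro m hm h
      rcases Nat.lt_or_ge m (n+1) with h' | h'
      · have hn : 0 < n := by omega
        exact (ih m hm (by omega)).trans (hmono n hn)
      · have : m = n+1 := by omega
        subst this; exact le_refl _
  intro n hn
  rcases Nat.lt_or_ge n 2 with h2 | h2
  · interval_cases n
    simp [h1]
  · have hn1 : (1:ℝ) < n := by exact_mod_cast h2
    have hlogn : 0 < Real.log n := Real.log_pos hn1
    set L : ℝ := Real.log n / Real.log a with hLdef
    have hL0 : 0 ≤ L := le_of_lt (div_pos hlogn hloga)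
    have hLa : L * Real.log a = Real.log n := div_mul_cancel₀ _ hloga.ne'
    have claim : ∀ k : ℕ, 0 < k → |I n - L| ≤ 1 / k := by
      intro k hk
      have hk' : (0:ℝ) < k := by exact_mod_cast hk
      set m : ℕ := ⌊(k:ℝ) * L⌋₊ with hmdef
      have hm1 : (m:ℝ) ≤ k * L := Nat.floor_le (by positivity)
      have hm2 : (k:ℝ) * L < m + 1 := Nat.lt_floor_add_one _
      have key1 : a ^ m ≤ n ^ k := by
        have hr : (a:ℝ) ^ m ≤ (n:ℝ) ^ k := by
          rw [← Real.log_le_log_iff (by positivity) (by positivity)]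
          rw [Real.log_pow, Real.log_pow]
          nlinarith
        exact_mod_cast hr
      have key2 : n ^ k < a ^ (m+1) := by
        have hr : (n:ℝ) ^ k < (a:ℝ) ^ (m+1) := by
          rw [← Real.log_lt_log_iff (by positivity)]
          rw [Real.log_pow, Real.log_pow]
          push_cast
          nlinarith
          positivity
        exact_mod_cast hr
      have e1 : (m:ℝ) ≤ k * I n := by
        have := hmono' (n ^ k) (a ^ m) (pow_pos apos m) key1
        rw [hpow a apos m, hpow n hn k, hnorm, mul_one] at this
        exact this
      have e2 : (k:ℝ) * I n ≤ m + 1 := by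
        have := hmono' (a ^ (m+1)) (n ^ k) (pow_pos hn k) key2.le
        rw [hpow a apos (m+1), hpow n hn k, hnorm, mul_one] at this
        push_cast at this
        linarith
      rw [abs_sub_le_iff]
      constructor
      · rw [le_div_iff₀ hk']; nlinarith
      · rw [le_div_iff₀ hk']; nlinarith
    have habs : |I n - L| = 0 := by
      by_contra h
      have hpos : 0 < |I n - L| := lt_of_le_of_ne (abs_nonneg _) (Ne.symm h)
      obtain ⟨k, hk⟩ := exists_nat_one_div_lt hpos
      have := claim (k+1) (Nat.succ_pos k)
      push_cast at this
      linarith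
    have := abs_eq_zero.mp habs
    linarith [sub_eq_zero.mp this]
end
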